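/- Let Z be a finite set of size m, p₀ a strictly positive pmf on Z, and pₙ a sequence of pmfs on Z with δₙ = √n (pₙ - p₀) convergent and M = sup_n max_{z∈Z} |δₙ(z)| < ∞. If Z₁,…,Zₙ are i.i.d. with pmf p₀ and ℓₙ(pₙ; p₀) = Σ_{i=1}^n log(pₙ(Zᵢ)/p₀(Zᵢ)), then E[exp(2 ℓₙ(pₙ; p₀))] = ∏_{i=1}^n (1 + Σ_{z∈Z} δₙ(z)²/(n p₀(z))) ≤ exp(Σ_{z∈Z} M²/p₀(z)), so that sup_n E[exp(2 ℓₙ(pₙ; p₀))] < ∞. -/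

import Mathlib

/-!
Under `p₀` the coordinates are i.i.d., so the second moment of the likelihood ratio is the `n`-th
power of `E_{p₀}[(pₙ/p₀)²] = 1 + χ²(pₙ, p₀)` (this is where `Σ pₙ = Σ p₀ = 1` cancels the linear
terms), and `χ²(pₙ, p₀) = Σ_z (pₙ(z) - p₀(z))² / p₀(z) = Σ_z δₙ(z)² / (n p₀(z))`. Then
`(1 + x)ⁿ ≤ exp(n x)` and `|δₙ| ≤ M` bound it by `exp(Σ_z M² / p₀(z))`, uniformly in `n`.
-/

open MeasureTheory
open scoped BigOperators

noncomputable def pmfMeasure {Z : Type*} [Fintype Z] [MeasurableSpace Z] (p : Z → ℝ) :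
    Measure Z :=
  ∑ z : Z, (ENNReal.ofReal (p z)) • Measure.dirac z

section pmfMeasure

variable {Z : Type*} [Fintype Z] [MeasurableSpace Z]

instance isFiniteMeasure_ofReal_smul (x : ℝ) (μ : Measure Z) [IsFiniteMeasure μ] :
    IsFiniteMeasure (ENNReal.ofReal x • μ) :=
  μ.smul_finite ENNReal.ofReal_ne_top

instance isFiniteMeasure_pmfMeasure (p : Z → ℝ) : IsFiniteMeasure (pmfMeasure p) := by
  unfold pmfMeasure
  infer_instance

theorem integral_pmfMeasure [MeasurableSingletonClass Z] {p : Z → ℝ} (hp : ∀ z, 0 ≤ p z)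
    (f : Z → ℝ) : ∫ x, f x ∂(pmfMeasure p) = ∑ z, p z * f z := by
  rw [pmfMeasure, integral_finsetSum_measure fun _ _ => .of_finite]
  refine Finset.sum_congr rfl fun z _ => ?_
  rw [integral_smul_measure, integral_dirac, ENNReal.toReal_ofReal (hp z), smul_eq_mul]

end pmfMeasure

theorem sum_mul_div_sq_eq_one_add_sum_sq_sub_div {ι : Type*} {s : Finset ι} {p q : ι → ℝ}
    (hq : ∀ i ∈ s, q i ≠ 0) (hp1 : ∑ i ∈ s, p i = 1) (hq1 : ∑ i ∈ s, q i = 1) :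
    ∑ i ∈ s, q i * (p i / q i) ^ 2 = 1 + ∑ i ∈ s, (p i - q i) ^ 2 / q i := by
  have hterm : ∀ i ∈ s, q i * (p i / q i) ^ 2 = (2 * p i - q i) + (p i - q i) ^ 2 / q i := by
    intro i hi
    field_simp [hq i hi]
    ring
  rw [Finset.sum_congr rfl hterm, Finset.sum_add_distrib, Finset.sum_sub_distrib,
    ← Finset.mul_sum, hp1, hq1]
  norm_num

theorem integral_pi_prod_sq_div_pmfMeasure {Z : Type*} [Fintype Z] [MeasurableSpace Z]
    [MeasurableSingletonClass Z] {p q : Z → ℝ} (hq : ∀ z, 0 < q z) (hp1 : ∑ z, p z = 1)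
    (hq1 : ∑ z, q z = 1) (n : ℕ) :
    ∫ ω, ∏ i : Fin n, (p (ω i) / q (ω i)) ^ 2 ∂(Measure.pi fun _ => pmfMeasure q)
      = (1 + ∑ z, (p z - q z) ^ 2 / q z) ^ n := by
  rw [integral_fintype_prod_eq_pow (fun z => (p z / q z) ^ 2),
    integral_pmfMeasure fun z => (hq z).le, Fintype.card_fin,
    sum_mul_div_sq_eq_one_add_sum_sq_sub_div (fun z _ => (hq z).ne') hp1 hq1]

theorem sq_sqrt_natCast_mul_div_natCast_mul {n : ℕ} (hn : n ≠ 0) (a b : ℝ) :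
    (Real.sqrt n * a) ^ 2 / (n * b) = a ^ 2 / b := by
  rw [mul_pow, Real.sq_sqrt n.cast_nonneg, mul_div_mul_left _ _ (Nat.cast_ne_zero.2 hn)]

theorem one_add_pow_le_exp_mul {x : ℝ} (hx : -1 ≤ x) (n : ℕ) :
    (1 + x) ^ n ≤ Real.exp (n * x) := by
  rw [Real.exp_nat_mul]
  exact pow_le_pow_left₀ (by linarith) (by linarith [Real.add_one_le_exp x]) n

theorem natCast_mul_sum_sq_div_le {ι : Type*} (s : Finset ι) (n : ℕ) {d q : ι → ℝ} {M : ℝ}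
    (hq : ∀ i ∈ s, 0 < q i) (hd : ∀ i ∈ s, |d i| ≤ M) :
    n * ∑ i ∈ s, d i ^ 2 / (n * q i) ≤ ∑ i ∈ s, M ^ 2 / q i := by
  rw [Finset.mul_sum]
  refine Finset.sum_le_sum fun i hi => ?_
  have hM : 0 ≤ M ^ 2 / q i := div_nonneg (sq_nonneg M) (hq i hi).le
  rcases Nat.eq_zero_or_pos n with rfl | hn
  · simpa using hM
  rw [← mul_div_assoc, mul_div_mul_left _ _ (by positivity)]
  exact div_le_div_of_nonneg_right (sq_le_sq.2 ((hd i hi).trans (le_abs_self M))) (hq i hi).le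

theorem stmt_3_general {Z : Type*} [Fintype Z] [MeasurableSpace Z] [MeasurableSingletonClass Z]
    (p₀ : Z → ℝ) (hp₀pos : ∀ z, 0 < p₀ z) (hp₀sum : ∑ z, p₀ z = 1)
    (p : ℕ → Z → ℝ) (hpsum : ∀ n, ∑ z, p n z = 1)
    (δ : ℕ → Z → ℝ) (hδ : ∀ n z, δ n z = Real.sqrt n * (p n z - p₀ z))
    (M : ℝ) (hM : ∀ n z, |δ n z| ≤ M) :
    (∀ n : ℕ,
      (∫ ω, ∏ i : Fin n, (p n (ω i) / p₀ (ω i)) ^ 2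
          ∂(Measure.pi fun _ : Fin n => pmfMeasure p₀))
        = (1 + ∑ z, (δ n z) ^ 2 / (n * p₀ z)) ^ n ∧
      (1 + ∑ z, (δ n z) ^ 2 / (n * p₀ z)) ^ n ≤ Real.exp (∑ z, M ^ 2 / p₀ z)) ∧
    ∃ C : ℝ, ∀ n : ℕ,
      (∫ ω, ∏ i : Fin n, (p n (ω i) / p₀ (ω i)) ^ 2
          ∂(Measure.pi fun _ : Fin n => pmfMeasure p₀)) ≤ C := by
  have hχ : ∀ n : ℕ, (1 + ∑ z, (δ n z) ^ 2 / (n * p₀ z)) ^ n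
      = (1 + ∑ z, (p n z - p₀ z) ^ 2 / p₀ z) ^ n := by
    intro n
    rcases eq_or_ne n 0 with rfl | hn
    · simp
    simp only [hδ, sq_sqrt_natCast_mul_div_natCast_mul hn]
  have hmoment : ∀ n : ℕ, (∫ ω, ∏ i : Fin n, (p n (ω i) / p₀ (ω i)) ^ 2
      ∂(Measure.pi fun _ : Fin n => pmfMeasure p₀)) = (1 + ∑ z, (δ n z) ^ 2 / (n * p₀ z)) ^ n :=
    fun n => (integral_pi_prod_sq_div_pmfMeasure hp₀pos (hpsum n) hp₀sum n).trans (hχ n).symm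
  have hbound : ∀ n : ℕ,
      (1 + ∑ z, (δ n z) ^ 2 / (n * p₀ z)) ^ n ≤ Real.exp (∑ z, M ^ 2 / p₀ z) := by
    intro n
    have hS : 0 ≤ ∑ z, (δ n z) ^ 2 / (n * p₀ z) :=
      Finset.sum_nonneg fun z _ => div_nonneg (sq_nonneg _) (by positivity [hp₀pos z])
    calc (1 + ∑ z, (δ n z) ^ 2 / (n * p₀ z)) ^ n
        ≤ Real.exp (n * ∑ z, (δ n z) ^ 2 / (n * p₀ z)) := one_add_pow_le_exp_mul (by linarith) n
      _ ≤ Real.exp (∑ z, M ^ 2 / p₀ z) := Real.exp_le_exp.2 <|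
          natCast_mul_sum_sq_div_le _ n (fun z _ => hp₀pos z) (fun z _ => hM n z)
  exact ⟨fun n => ⟨hmoment n, hbound n⟩, _, fun n => (hmoment n).le.trans (hbound n)⟩

/-- for local alternatives `pₙ` with `δₙ = √n (pₙ - p₀)` convergent and uniformly
bounded by `M`, the second moment of the likelihood ratio satisfies
`E_{p₀}[exp(2 ℓₙ(pₙ;p₀))] = (1 + Σ_z δₙ(z)²/(n p₀(z)))ⁿ ≤ exp(Σ_z M²/p₀(z))` (note
`exp(2ℓₙ) = ∏ᵢ (pₙ(Zᵢ)/p₀(Zᵢ))²`), hence `sup_n E[exp(2ℓₙ)] < ∞`. -/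
theorem stmt_3 {Z : Type*} [Fintype Z] [MeasurableSpace Z] [MeasurableSingletonClass Z]
    (p₀ : Z → ℝ) (hp₀pos : ∀ z, 0 < p₀ z) (hp₀sum : ∑ z, p₀ z = 1)
    (p : ℕ → Z → ℝ) (hpnn : ∀ n z, 0 ≤ p n z) (hpsum : ∀ n, ∑ z, p n z = 1)
    (δ : ℕ → Z → ℝ) (hδ : ∀ n z, δ n z = Real.sqrt n * (p n z - p₀ z))
    (δlim : Z → ℝ) (hδconv : Filter.Tendsto δ Filter.atTop (nhds δlim))
    (M : ℝ) (hM : ∀ n z, |δ n z| ≤ M) :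
    (∀ n : ℕ,
      (∫ ω, ∏ i : Fin n, (p n (ω i) / p₀ (ω i)) ^ 2
          ∂(Measure.pi fun _ : Fin n => pmfMeasure p₀))
        = (1 + ∑ z, (δ n z) ^ 2 / (n * p₀ z)) ^ n ∧
      (1 + ∑ z, (δ n z) ^ 2 / (n * p₀ z)) ^ n ≤ Real.exp (∑ z, M ^ 2 / p₀ z)) ∧
    ∃ C : ℝ, ∀ n : ℕ,
      (∫ ω, ∏ i : Fin n, (p n (ω i) / p₀ (ω i)) ^ 2
          ∂(Measure.pi fun _ : Fin n => pmfMeasure p₀)) ≤ C :=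
  stmt_3_general p₀ hp₀pos hp₀sum p hpsum δ hδ M hM
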